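/- Let 0 < s ≤ t, let u₁, u₂ ∈ ℝ, and let χ : ℝ × ℝ → ℝ be bounded and measurable. Then the limit as K → ∞ of ∫₀^s ∫_ℝ (d/du)(T_{s−r} G^K_{u₁})(u) · (d/du)(T_{t−r} G^K_{u₂})(u) · χ(r,u) du dr exists and equals ∫₀^s ∫_ℝ p_{s−r}(u,u₁) · p_{t−r}(u,u₂) · χ(r,u) du dr. -/

import Mathlib

/-- The Gaussian heat kernel `p_t(x,y) = (4πt)^{-1/2} exp(-(x-y)²/(4t))`. -/
noncomputable def hk (t x y : ℝ) : ℝ :=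
  (4 * Real.pi * t) ^ (-(1:ℝ)/2) * Real.exp (-(x - y)^2 / (4 * t))

/-- The heat semigroup `(T_t f)(x) = ∫ p_t(x,y) f(y) dy`. -/
noncomputable def heatSg (t : ℝ) (f : ℝ → ℝ) (x : ℝ) : ℝ := ∫ y : ℝ, hk t x y * f y

/-- The triangular approximation `G^K_u` of the Heaviside function centred at `u`. -/
noncomputable def G (K u v : ℝ) : ℝ := if u ≤ v then max 0 (1 - (v - u) / K) else 0

/-- The normalized indicator `ι^ε_u = ε⁻¹ 1_{[u, u+ε]}`. -/
noncomputable def iot (ε u : ℝ) : ℝ → ℝ := Set.indicator (Set.Icc u (u + ε)) (fun _ => ε⁻¹)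

/-- The Gaussian tail function `Φ_t(a) = ∫_a^∞ p_t(0,v) dv`. -/
noncomputable def Phi (t a : ℝ) : ℝ := ∫ v in Set.Ioi a, hk t 0 v

open MeasureTheory Real Set Filter intervalIntegral

open MeasureTheory Real Set Filter intervalIntegral

lemma hk_symm (τ x y : ℝ) : hk τ x y = hk τ y x := by
  unfold hk; rw [show (x - y)^2 = (y - x)^2 by ring]

lemma hk_nonneg {τ : ℝ} (hτ : 0 < τ) (x y : ℝ) : 0 ≤ hk τ x y :=
  mul_nonneg (Real.rpow_nonneg (by positivity) _) (Real.exp_nonneg _)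

lemma hk_le {τ : ℝ} (hτ : 0 < τ) (x y : ℝ) : hk τ x y ≤ (4 * Real.pi * τ) ^ (-(1:ℝ)/2) := by
  have : Real.exp (-(x - y)^2 / (4 * τ)) ≤ 1 := by
    rw [Real.exp_le_one_iff]
    apply div_nonpos_of_nonpos_of_nonneg (neg_nonpos.mpr (by positivity)) (by positivity)
  calc hk τ x y ≤ (4 * Real.pi * τ) ^ (-(1:ℝ)/2) * 1 :=
        mul_le_mul_of_nonneg_left this (Real.rpow_nonneg (by positivity) _)
    _ = _ := mul_one _

lemma hk_cont {τ : ℝ} : Continuous (fun p : ℝ × ℝ => hk τ p.1 p.2) := by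
  unfold hk; fun_prop

lemma integrable_hk {τ : ℝ} (hτ : 0 < τ) (x : ℝ) : Integrable (fun y => hk τ x y) := by
  unfold hk
  apply Integrable.const_mul
  have hb : (0:ℝ) < 1 / (4 * τ) := by positivity
  have h := (integrable_exp_neg_mul_sq hb).comp_sub_left x
  simpa [neg_div, mul_comm, div_eq_mul_inv, mul_assoc, mul_left_comm] using h

lemma integral_hk {τ : ℝ} (hτ : 0 < τ) (x : ℝ) : ∫ y, hk τ x y = 1 := by
  unfold hk
  rw [MeasureTheory.integral_const_mul]
  have hb : (0:ℝ) < 1 / (4 * τ) := by positivity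
  have h1 : ∀ y : ℝ, -(x - y)^2 / (4 * τ) = -(1/(4*τ)) * (x - y)^2 := by
    intro y; field_simp
  simp_rw [h1]
  rw [integral_sub_left_eq_self (fun z => Real.exp (-(1/(4*τ)) * z^2)) volume x]
  rw [integral_gaussian]
  have h2 : Real.pi / (1/(4*τ)) = 4 * Real.pi * τ := by field_simp
  rw [h2, show Real.sqrt (4*Real.pi*τ) = (4*Real.pi*τ) ^ ((1:ℝ)/2) from Real.sqrt_eq_rpow _]
  rw [show -(1:ℝ)/2 = -((1:ℝ)/2) by ring, Real.rpow_neg (by positivity)]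
  rw [inv_mul_cancel₀ (by positivity)]

lemma integral_hk_left {τ : ℝ} (hτ : 0 < τ) (y : ℝ) : ∫ x, hk τ x y = 1 := by
  simp_rw [fun x => hk_symm τ x y]
  exact integral_hk hτ y

lemma hasDerivAt_hk_right {τ : ℝ} (hτ : 0 < τ) (x y : ℝ) :
    HasDerivAt (fun y => hk τ x y) ((x - y) / (2 * τ) * hk τ x y) y := by
  have h0 : HasDerivAt (fun y : ℝ => x - y) (-1) y := by
    simpa using (hasDerivAt_id y).const_sub x
  have h1 : HasDerivAt (fun y : ℝ => -(x - y)^2 / (4 * τ))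
      (-(2 * (x - y) * (-1)) / (4 * τ)) y := ((h0.pow 2).neg.div_const _).congr_deriv (by ring)
  have h2 : HasDerivAt (fun y => hk τ x y) ((4 * Real.pi * τ) ^ (-(1:ℝ)/2) *
      (Real.exp (-(x - y)^2 / (4 * τ)) * (-(2 * (x - y) * (-1)) / (4 * τ)))) y :=
    (h1.exp).const_mul ((4 * Real.pi * τ) ^ (-(1:ℝ)/2))
  convert h2 using 1
  unfold hk
  field_simp
  ring

lemma hasDerivAt_hk_left {τ : ℝ} (hτ : 0 < τ) (x y : ℝ) :
    HasDerivAt (fun x => hk τ x y) (-((x - y) / (2 * τ)) * hk τ x y) x := by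
  have h := hasDerivAt_hk_right hτ y x
  have h2 : HasDerivAt (fun x => hk τ y x) ((y - x) / (2 * τ) * hk τ y x) x := h
  simp_rw [fun z => hk_symm τ y z] at h2
  convert h2 using 1
  rw [hk_symm]
  ring

lemma G_nonneg (K a v : ℝ) : 0 ≤ G K a v := by
  unfold G; split <;> simp

lemma G_le_one {K : ℝ} (hK : 0 < K) (a v : ℝ) : G K a v ≤ 1 := by
  unfold G; split
  · refine max_le zero_le_one ?_
    have : 0 ≤ (v - a) / K := div_nonneg (by linarith [‹a ≤ v›]) hK.le
    linarith
  · exact zero_le_one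

lemma measurable_G (K a : ℝ) : Measurable (G K a) := by
  unfold G
  exact Measurable.ite (measurableSet_le measurable_const measurable_id)
    (measurable_const.max (by fun_prop)) measurable_const

lemma G_eq {K : ℝ} (hK : 0 < K) (a : ℝ) :
    G K a = Set.indicator (Set.Icc a (a + K)) (fun y => 1 - (y - a) / K) := by
  funext v
  unfold G
  by_cases h1 : a ≤ v
  · by_cases h2 : v ≤ a + K
    · rw [if_pos h1, Set.indicator_of_mem (Set.mem_Icc.mpr ⟨h1, h2⟩), max_eq_right]
      rw [sub_nonneg, div_le_one hK]; linarith
    · rw [if_pos h1, Set.indicator_of_notMem (fun hm => h2 hm.2), max_eq_left]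
      rw [sub_nonpos, le_div_iff₀ hK]; push_neg at h2; linarith
  · rw [if_neg h1, Set.indicator_of_notMem (fun hm => h1 hm.1)]

lemma integrable_bound_aux (c d : ℝ) (f : ℝ → ℝ) (hf : Continuous f) :
    Integrable (Set.indicator (Set.Icc c d) f) :=
  (hf.integrableOn_Icc).integrable_indicator measurableSet_Icc

lemma integrable_hk_G {τ K : ℝ} (hτ : 0 < τ) (hK : 0 < K) (a x : ℝ) :
    Integrable (fun y => hk τ x y * G K a y) := by
  refine Integrable.mono' (integrable_bound_aux a (a+K) (fun _ => (4*Real.pi*τ) ^ (-(1:ℝ)/2)) continuous_const)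
    (((hk_cont.comp (Continuous.prodMk_right x)).measurable.mul (measurable_G K a)).aestronglyMeasurable) ?_
  refine Filter.Eventually.of_forall (fun y => ?_)
  by_cases hy : y ∈ Set.Icc a (a + K)
  · rw [Set.indicator_of_mem hy]
    rw [Real.norm_eq_abs, abs_mul, abs_of_nonneg (hk_nonneg hτ _ _), abs_of_nonneg (G_nonneg K a y)]
    calc hk τ x y * G K a y ≤ hk τ x y * 1 :=
          mul_le_mul_of_nonneg_left (G_le_one hK a y) (hk_nonneg hτ _ _)
      _ ≤ _ := by rw [mul_one]; exact hk_le hτ x y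
  · rw [Set.indicator_of_notMem hy]
    have : G K a y = 0 := by
      rw [G_eq hK a, Set.indicator_of_notMem hy]
    simp [this]

set_option maxHeartbeats 1000000 in
lemma ibp_aux {τ K : ℝ} (hτ : 0 < τ) (hK : 0 < K) (a u : ℝ) :
    ∫ y in a..(a+K), (u - y)/(2*τ) * hk τ u y * (1 - (y - a)/K)
      = (∫ y in a..(a+K), hk τ u y) / K - hk τ u a := by
  have ibp := intervalIntegral.integral_mul_deriv_eq_deriv_mul
    (u := fun y => hk τ u y) (u' := fun y => (u - y)/(2*τ) * hk τ u y)
    (v := fun y => 1 - (y - a)/K) (v' := fun y => -(1/K))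
    (a := a) (b := a + K)
    (fun y _ => hasDerivAt_hk_right hτ u y)
    (fun y _ => by
      simpa using (((hasDerivAt_id y).sub_const a).div_const K).const_sub 1)
    (Continuous.intervalIntegrable
      ((by fun_prop : Continuous (fun y : ℝ => (u - y)/(2*τ))).mul
        (hk_cont.comp (Continuous.prodMk_right u))) _ _)
    (intervalIntegrable_const)
  beta_reduce at ibp
  rw [intervalIntegral.integral_mul_const] at ibp
  rw [show (1 : ℝ) - (a + K - a)/K = 0 from by field_simp; ring,
    show (1 : ℝ) - (a - a)/K = 1 from by simp, mul_zero, mul_one] at ibp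
  have h : (∫ y in a..(a+K), hk τ u y) * -(1/K) = -((∫ y in a..(a+K), hk τ u y) / K) := by
    ring
  rw [h] at ibp
  linarith [ibp]

set_option maxHeartbeats 1000000 in
lemma integral_Fprime {τ K : ℝ} (hτ : 0 < τ) (hK : 0 < K) (a u : ℝ) :
    (∫ y, (-((u - y) / (2*τ)) * hk τ u y) * G K a y)
      = hk τ u a - (∫ y in a..(a + K), hk τ u y) / K := by
  have hab : a ≤ a + K := by linarith
  rw [G_eq hK a]
  have hrw : (fun y => (-((u - y) / (2*τ)) * hk τ u y) *
      Set.indicator (Set.Icc a (a+K)) (fun y => 1 - (y - a) / K) y)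
      = Set.indicator (Set.Icc a (a+K))
        (fun y => (-((u - y) / (2*τ)) * hk τ u y) * (1 - (y - a) / K)) := by
    funext y
    by_cases hy : y ∈ Set.Icc a (a + K)
    · rw [Set.indicator_of_mem hy, Set.indicator_of_mem hy]
    · rw [Set.indicator_of_notMem hy, Set.indicator_of_notMem hy, mul_zero]
  rw [hrw, MeasureTheory.integral_indicator measurableSet_Icc,
    MeasureTheory.integral_Icc_eq_integral_Ioc,
    ← intervalIntegral.integral_of_le hab]
  calc (∫ y in a..(a+K), -((u - y) / (2*τ)) * hk τ u y * (1 - (y - a) / K))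
      = -∫ y in a..(a+K), (u - y) / (2*τ) * hk τ u y * (1 - (y - a) / K) := by
        rw [← intervalIntegral.integral_neg]; congr 1; funext y; ring
    _ = -((∫ y in a..(a+K), hk τ u y) / K - hk τ u a) := by rw [ibp_aux hτ hK a u]
    _ = hk τ u a - (∫ y in a..(a + K), hk τ u y) / K := by ring

set_option maxHeartbeats 1000000 in
lemma hasDerivAt_heatSg_G {τ K : ℝ} (hτ : 0 < τ) (hK : 0 < K) (a u : ℝ) :
    HasDerivAt (heatSg τ (G K a))
      (hk τ u a - (∫ y in a..(a + K), hk τ u y) / K) u := by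
  have key := hasDerivAt_integral_of_dominated_loc_of_deriv_le (μ := volume)
    (F := fun x y => hk τ x y * G K a y)
    (F' := fun x y => (-((x - y) / (2*τ)) * hk τ x y) * G K a y)
    (x₀ := u) (s := Metric.ball u 1) (Metric.ball_mem_nhds u one_pos)
    (bound := Set.indicator (Set.Icc a (a+K))
      (fun y => (|u| + 1 + |y|)/(2*τ) * (4 * Real.pi * τ) ^ (-(1:ℝ)/2)))
    (Filter.Eventually.of_forall (fun x =>
      ((hk_cont.comp (Continuous.prodMk_right x)).measurable.mul (measurable_G K a)).aestronglyMeasurable))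
    (integrable_hk_G hτ hK a u)
    ((((by fun_prop : Continuous (fun y : ℝ => -((u - y) / (2*τ)))).mul
        (hk_cont.comp (Continuous.prodMk_right u))).measurable.mul (measurable_G K a)).aestronglyMeasurable)
    ?_ (integrable_bound_aux a (a+K) _ (by fun_prop)) ?_
  · have := key.2
    rw [integral_Fprime hτ hK a u] at this
    exact this
  · -- bound
    refine Filter.Eventually.of_forall (fun y => fun x hx => ?_)
    by_cases hy : y ∈ Set.Icc a (a + K)
    · rw [Set.indicator_of_mem hy]
      rw [Real.norm_eq_abs, abs_mul, abs_mul]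
      have h1 : |(-((x - y) / (2*τ)))| ≤ (|u| + 1 + |y|)/(2*τ) := by
        rw [abs_neg, abs_div, abs_of_pos (by positivity : (0:ℝ) < 2*τ)]
        apply div_le_div_of_nonneg_right ?_ (by positivity)
        have hxu : |x - u| < 1 := by
          simpa [Real.dist_eq] using Metric.mem_ball.mp hx
        calc |x - y| ≤ |x - u| + |u - y| := by
              simpa using abs_sub_le x u y
          _ ≤ 1 + (|u| + |y|) := by
              have := abs_sub u y
              linarith [abs_sub_abs_le_abs_sub u y, abs_sub u y]
          _ = |u| + 1 + |y| := by ring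
      have h2 : |hk τ x y| ≤ (4 * Real.pi * τ) ^ (-(1:ℝ)/2) := by
        rw [abs_of_nonneg (hk_nonneg hτ _ _)]; exact hk_le hτ x y
      have h3 : |G K a y| ≤ 1 := by
        rw [abs_of_nonneg (G_nonneg K a y)]; exact G_le_one hK a y
      calc |(-((x - y) / (2*τ)))| * |hk τ x y| * |G K a y|
          ≤ ((|u| + 1 + |y|)/(2*τ)) * ((4 * Real.pi * τ) ^ (-(1:ℝ)/2)) * 1 :=
            mul_le_mul (mul_le_mul h1 h2 (abs_nonneg _) (by positivity)) h3
              (abs_nonneg _) (by positivity)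
        _ = (|u| + 1 + |y|)/(2*τ) * (4 * Real.pi * τ) ^ (-(1:ℝ)/2) := by ring
    · have h0 : G K a y = 0 := by rw [G_eq hK a, Set.indicator_of_notMem hy]
      simp [h0, Set.indicator_of_notMem hy]
  · refine Filter.Eventually.of_forall (fun y => fun x hx => ?_)
    exact (hasDerivAt_hk_left hτ x y).mul_const _

lemma E_nonneg {τ K : ℝ} (hτ : 0 < τ) (hK : 0 < K) (a u : ℝ) :
    0 ≤ (∫ y in a..(a+K), hk τ u y) / K := by
  apply div_nonneg _ hK.le
  apply intervalIntegral.integral_nonneg (by linarith)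
  exact fun y _ => hk_nonneg hτ u y

lemma E_le {τ K : ℝ} (hτ : 0 < τ) (hK : 0 < K) (a u : ℝ) :
    (∫ y in a..(a+K), hk τ u y) / K ≤ 1 / K := by
  have h1 : (∫ y in a..(a+K), hk τ u y) ≤ 1 := by
    rw [intervalIntegral.integral_of_le (by linarith : a ≤ a + K)]
    calc (∫ y in Set.Ioc a (a+K), hk τ u y) ≤ ∫ y, hk τ u y :=
          MeasureTheory.setIntegral_le_integral (integrable_hk hτ u)
            (Filter.Eventually.of_forall (fun y => hk_nonneg hτ u y))
      _ = 1 := integral_hk hτ u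
  gcongr

lemma integrable_H {τ K : ℝ} (hτ : 0 < τ) (hK : 0 < K) (a : ℝ) :
    Integrable (fun p : ℝ × ℝ => hk τ p.1 p.2 *
      Set.indicator (Set.Ioc a (a+K)) (fun _ => (1:ℝ)) p.2)
      (volume.prod volume) := by
  have hasm : AEStronglyMeasurable (fun p : ℝ × ℝ => hk τ p.1 p.2 *
      Set.indicator (Set.Ioc a (a+K)) (fun _ => (1:ℝ)) p.2) (volume.prod volume) := by
    exact (hk_cont.measurable.mul
      ((measurable_const.indicator measurableSet_Ioc).comp measurable_snd)).aestronglyMeasurable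
  rw [MeasureTheory.integrable_prod_iff' hasm]
  constructor
  · refine Filter.Eventually.of_forall (fun y => ?_)
    have : Integrable (fun x => hk τ x y) := by
      simp_rw [fun x => hk_symm τ x y]; exact integrable_hk hτ y
    simpa using this.mul_const (Set.indicator (Set.Ioc a (a+K)) (fun _ => (1:ℝ)) y)
  · have hcong : (fun y => ∫ x, ‖hk τ x y *
        Set.indicator (Set.Ioc a (a+K)) (fun _ => (1:ℝ)) y‖)
        = Set.indicator (Set.Ioc a (a+K)) (fun _ => (1:ℝ)) := by
      funext y
      by_cases hy : y ∈ Set.Ioc a (a+K)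
      · rw [Set.indicator_of_mem hy]
        simp only [mul_one]
        have : (fun x => ‖hk τ x y‖) = fun x => hk τ x y := by
          funext x; rw [Real.norm_eq_abs, abs_of_nonneg (hk_nonneg hτ x y)]
        rw [this, integral_hk_left hτ y]
      · rw [Set.indicator_of_notMem hy]
        simp
    rw [hcong]
    have : IntegrableOn (fun _ => (1:ℝ)) (Set.Ioc a (a+K)) :=
      integrableOn_const measure_Ioc_lt_top.ne
    exact this.integrable_indicator measurableSet_Ioc

lemma integral_H_eq {τ K : ℝ} (hτ : 0 < τ) (hK : 0 < K) (a u : ℝ) :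
    (∫ y, hk τ u y * Set.indicator (Set.Ioc a (a+K)) (fun _ => (1:ℝ)) y)
      = ∫ y in a..(a+K), hk τ u y := by
  rw [intervalIntegral.integral_of_le (by linarith : a ≤ a + K),
    ← MeasureTheory.integral_indicator measurableSet_Ioc]
  congr 1
  funext y
  by_cases hy : y ∈ Set.Ioc a (a+K)
  · rw [Set.indicator_of_mem hy, Set.indicator_of_mem hy, mul_one]
  · rw [Set.indicator_of_notMem hy, Set.indicator_of_notMem hy, mul_zero]

lemma integrable_E {τ K : ℝ} (hτ : 0 < τ) (hK : 0 < K) (a : ℝ) :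
    Integrable (fun u => (∫ y in a..(a+K), hk τ u y) / K) := by
  have h := (integrable_H hτ hK a).integral_prod_left
  simp_rw [fun u => (integral_H_eq hτ hK a u).symm]
  exact h.div_const K

lemma integral_E {τ K : ℝ} (hτ : 0 < τ) (hK : 0 < K) (a : ℝ) :
    (∫ u, (∫ y in a..(a+K), hk τ u y) / K) = 1 := by
  simp_rw [fun u => (integral_H_eq hτ hK a u).symm, div_eq_mul_inv]
  rw [MeasureTheory.integral_mul_const]
  have hswap := MeasureTheory.integral_integral_swap
    (f := fun u y => hk τ u y * Set.indicator (Set.Ioc a (a+K)) (fun _ => (1:ℝ)) y)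
    (μ := volume) (ν := volume) (integrable_H hτ hK a)
  rw [hswap]
  have : (fun y => ∫ u, hk τ u y * Set.indicator (Set.Ioc a (a+K)) (fun _ => (1:ℝ)) y)
      = Set.indicator (Set.Ioc a (a+K)) (fun _ => (1:ℝ)) := by
    funext y
    by_cases hy : y ∈ Set.Ioc a (a+K)
    · rw [Set.indicator_of_mem hy]
      simp only [mul_one]
      exact integral_hk_left hτ y
    · rw [Set.indicator_of_notMem hy]
      simp
  rw [this, MeasureTheory.integral_indicator measurableSet_Ioc]
  simp [Real.volume_Ioc]
  rw [max_eq_left hK.le]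
  field_simp

lemma integrable_hk' {τ : ℝ} (hτ : 0 < τ) (y : ℝ) : Integrable (fun x => hk τ x y) := by
  simp_rw [fun x => hk_symm τ x y]; exact integrable_hk hτ y

lemma cont_hk' {τ : ℝ} (y : ℝ) : Continuous (fun x => hk τ x y) := by
  unfold hk; fun_prop

lemma abs_mul3_le {x y z A B : ℝ} (hx : 0 ≤ x) (hy : |y| ≤ A) (hz : |z| ≤ B) :
    |x * y * z| ≤ x * (A * B) := by
  rw [abs_mul, abs_mul]
  calc |x| * |y| * |z| = |x| * (|y| * |z|) := by ring
    _ ≤ |x| * (A * B) := mul_le_mul_of_nonneg_left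
        (mul_le_mul hy hz (abs_nonneg _) ((abs_nonneg y).trans hy)) (abs_nonneg _)
    _ = x * (A * B) := by rw [abs_of_nonneg hx]

set_option maxHeartbeats 1000000 in
lemma step {τ₁ τ₂ K M : ℝ} (hτ₁ : 0 < τ₁) (hτ₂ : 0 < τ₂) (hK : 0 < K)
    (u₁ u₂ : ℝ) (χr : ℝ → ℝ) (hm : Measurable χr) (hb : ∀ u, |χr u| ≤ M) :
    |(∫ u, (hk τ₁ u u₁ - (∫ y in u₁..(u₁+K), hk τ₁ u y)/K) *
           (hk τ₂ u u₂ - (∫ y in u₂..(u₂+K), hk τ₂ u y)/K) * χr u)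
      - ∫ u, hk τ₁ u u₁ * hk τ₂ u u₂ * χr u| ≤ 3 * M / K := by
  have hM : 0 ≤ M := (abs_nonneg _).trans (hb 0)
  set C₂ : ℝ := (4*Real.pi*τ₂) ^ (-(1:ℝ)/2) with hC₂def
  set p₁ : ℝ → ℝ := fun u => hk τ₁ u u₁ with hp₁
  set p₂ : ℝ → ℝ := fun u => hk τ₂ u u₂ with hp₂
  set E₁ : ℝ → ℝ := fun u => (∫ y in u₁..(u₁+K), hk τ₁ u y)/K with hE₁
  set E₂ : ℝ → ℝ := fun u => (∫ y in u₂..(u₂+K), hk τ₂ u y)/K with hE₂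
  have hC₂ : ∀ u, |p₂ u| ≤ C₂ := fun u => by
    rw [hp₂, abs_of_nonneg (hk_nonneg hτ₂ _ _)]; exact hk_le hτ₂ u u₂
  have hE₁b : ∀ u, |E₁ u| ≤ 1/K := fun u => by
    rw [hE₁, abs_of_nonneg (E_nonneg hτ₁ hK u₁ u)]; exact E_le hτ₁ hK u₁ u
  have hE₂b : ∀ u, |E₂ u| ≤ 1/K := fun u => by
    rw [hE₂, abs_of_nonneg (E_nonneg hτ₂ hK u₂ u)]; exact E_le hτ₂ hK u₂ u
  have hp₁n : ∀ u, 0 ≤ p₁ u := fun u => hk_nonneg hτ₁ _ _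
  have hp₂n : ∀ u, 0 ≤ p₂ u := fun u => hk_nonneg hτ₂ _ _
  have hE₁n : ∀ u, 0 ≤ E₁ u := fun u => E_nonneg hτ₁ hK u₁ u
  have hχb : ∀ u, |χr u| ≤ M := hb
  -- measurability
  have hmp₁ : AEStronglyMeasurable p₁ volume := (cont_hk' u₁).aestronglyMeasurable
  have hmp₂ : AEStronglyMeasurable p₂ volume := (cont_hk' u₂).aestronglyMeasurable
  have hmE₁ : AEStronglyMeasurable E₁ volume := (integrable_E hτ₁ hK u₁).aestronglyMeasurable
  have hmE₂ : AEStronglyMeasurable E₂ volume := (integrable_E hτ₂ hK u₂).aestronglyMeasurable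
  have hmχ : AEStronglyMeasurable χr volume := hm.aestronglyMeasurable
  -- pointwise bounds
  have pb1 : ∀ u, |p₁ u * p₂ u * χr u| ≤ p₁ u * (C₂ * M) :=
    fun u => abs_mul3_le (hp₁n u) (hC₂ u) (hχb u)
  have pb2 : ∀ u, |p₁ u * E₂ u * χr u| ≤ p₁ u * (1/K * M) :=
    fun u => abs_mul3_le (hp₁n u) (hE₂b u) (hχb u)
  have pb3 : ∀ u, |E₁ u * p₂ u * χr u| ≤ p₂ u * (1/K * M) := fun u => by
    rw [show E₁ u * p₂ u * χr u = p₂ u * E₁ u * χr u from by ring]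
    exact abs_mul3_le (hp₂n u) (hE₁b u) (hχb u)
  have pb4 : ∀ u, |E₁ u * E₂ u * χr u| ≤ E₁ u * (1/K * M) :=
    fun u => abs_mul3_le (hE₁n u) (hE₂b u) (hχb u)
  -- integrable dominators
  have Id1 : Integrable (fun u => p₁ u * (C₂ * M)) := (integrable_hk' hτ₁ u₁).mul_const _
  have Id2 : Integrable (fun u => p₁ u * (1/K * M)) := (integrable_hk' hτ₁ u₁).mul_const _
  have Id3 : Integrable (fun u => p₂ u * (1/K * M)) := (integrable_hk' hτ₂ u₂).mul_const _
  have Id4 : Integrable (fun u => E₁ u * (1/K * M)) := (integrable_E hτ₁ hK u₁).mul_const _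
  -- integrabilities
  have Ipp : Integrable (fun u => p₁ u * p₂ u * χr u) :=
    Integrable.mono' Id1 ((hmp₁.mul hmp₂).mul hmχ)
      (Filter.Eventually.of_forall (fun u => by rw [Real.norm_eq_abs]; exact pb1 u))
  have IpE : Integrable (fun u => p₁ u * E₂ u * χr u) :=
    Integrable.mono' Id2 ((hmp₁.mul hmE₂).mul hmχ)
      (Filter.Eventually.of_forall (fun u => by rw [Real.norm_eq_abs]; exact pb2 u))
  have IEp : Integrable (fun u => E₁ u * p₂ u * χr u) :=
    Integrable.mono' Id3 ((hmE₁.mul hmp₂).mul hmχ)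
      (Filter.Eventually.of_forall (fun u => by rw [Real.norm_eq_abs]; exact pb3 u))
  have IEE : Integrable (fun u => E₁ u * E₂ u * χr u) :=
    Integrable.mono' Id4 ((hmE₁.mul hmE₂).mul hmχ)
      (Filter.Eventually.of_forall (fun u => by rw [Real.norm_eq_abs]; exact pb4 u))
  have Isub1 : Integrable (fun u => p₁ u * p₂ u * χr u - p₁ u * E₂ u * χr u) := Ipp.sub IpE
  have Isub2 : Integrable (fun u =>
      p₁ u * p₂ u * χr u - p₁ u * E₂ u * χr u - E₁ u * p₂ u * χr u) := Isub1.sub IEp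
  -- expansion
  have hexp : (∫ u, (p₁ u - E₁ u) * (p₂ u - E₂ u) * χr u)
      = ((∫ u, p₁ u * p₂ u * χr u) - ∫ u, p₁ u * E₂ u * χr u)
        - (∫ u, E₁ u * p₂ u * χr u) + ∫ u, E₁ u * E₂ u * χr u := by
    calc ∫ u, (p₁ u - E₁ u) * (p₂ u - E₂ u) * χr u
        = ∫ u, (p₁ u * p₂ u * χr u - p₁ u * E₂ u * χr u - E₁ u * p₂ u * χr u)
            + E₁ u * E₂ u * χr u := by congr 1; funext u; ring
      _ = (∫ u, p₁ u * p₂ u * χr u - p₁ u * E₂ u * χr u - E₁ u * p₂ u * χr u)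
            + ∫ u, E₁ u * E₂ u * χr u := MeasureTheory.integral_add Isub2 IEE
      _ = ((∫ u, p₁ u * p₂ u * χr u - p₁ u * E₂ u * χr u) - ∫ u, E₁ u * p₂ u * χr u)
            + ∫ u, E₁ u * E₂ u * χr u := by rw [MeasureTheory.integral_sub Isub1 IEp]
      _ = (((∫ u, p₁ u * p₂ u * χr u) - ∫ u, p₁ u * E₂ u * χr u) - ∫ u, E₁ u * p₂ u * χr u)
            + ∫ u, E₁ u * E₂ u * χr u := by rw [MeasureTheory.integral_sub Ipp IpE]
  rw [hexp]
  -- bounds for each error term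
  have key : ∀ (f g : ℝ → ℝ), Integrable f → Integrable g → (∀ u, |f u| ≤ g u)
      → (∫ u, g u) = M/K → |∫ u, f u| ≤ M/K := by
    intro f g If Ig hfg hInt
    calc |∫ u, f u| ≤ ∫ u, |f u| := by
          simpa only [Real.norm_eq_abs] using MeasureTheory.norm_integral_le_integral_norm f
      _ ≤ ∫ u, g u := MeasureTheory.integral_mono If.abs Ig hfg
      _ = M/K := hInt
  have hint1 : (∫ u, p₁ u * (1/K * M)) = M/K := by
    rw [MeasureTheory.integral_mul_const, hp₁, integral_hk_left hτ₁ u₁]; field_simp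
  have hint2 : (∫ u, p₂ u * (1/K * M)) = M/K := by
    rw [MeasureTheory.integral_mul_const, hp₂, integral_hk_left hτ₂ u₂]; field_simp
  have hint3 : (∫ u, E₁ u * (1/K * M)) = M/K := by
    rw [MeasureTheory.integral_mul_const, hE₁, integral_E hτ₁ hK u₁]; field_simp
  have bound1 := key _ _ IpE Id2 pb2 hint1
  have bound2 := key _ _ IEp Id3 pb3 hint2
  have bound3 := key _ _ IEE Id4 pb4 hint3
  have halg : ((∫ u, p₁ u * p₂ u * χr u) - ∫ u, p₁ u * E₂ u * χr u)
        - (∫ u, E₁ u * p₂ u * χr u) + (∫ u, E₁ u * E₂ u * χr u)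
        - (∫ u, p₁ u * p₂ u * χr u)
      = -(∫ u, p₁ u * E₂ u * χr u) - (∫ u, E₁ u * p₂ u * χr u)
        + ∫ u, E₁ u * E₂ u * χr u := by ring
  rw [halg]
  have habs : |-(∫ u, p₁ u * E₂ u * χr u) - (∫ u, E₁ u * p₂ u * χr u)
        + ∫ u, E₁ u * E₂ u * χr u|
      ≤ |∫ u, p₁ u * E₂ u * χr u| + |∫ u, E₁ u * p₂ u * χr u|
        + |∫ u, E₁ u * E₂ u * χr u| := by
    calc |-(∫ u, p₁ u * E₂ u * χr u) - (∫ u, E₁ u * p₂ u * χr u)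
          + ∫ u, E₁ u * E₂ u * χr u|
        ≤ |(-(∫ u, p₁ u * E₂ u * χr u) - (∫ u, E₁ u * p₂ u * χr u))|
          + |∫ u, E₁ u * E₂ u * χr u| := abs_add_le _ _
      _ ≤ |∫ u, p₁ u * E₂ u * χr u| + |∫ u, E₁ u * p₂ u * χr u|
          + |∫ u, E₁ u * E₂ u * χr u| := by
          have := abs_sub (-(∫ u, p₁ u * E₂ u * χr u)) (∫ u, E₁ u * p₂ u * χr u)
          rw [abs_neg] at this
          linarith
  calc |-(∫ u, p₁ u * E₂ u * χr u) - (∫ u, E₁ u * p₂ u * χr u)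
        + ∫ u, E₁ u * E₂ u * χr u|
      ≤ |∫ u, p₁ u * E₂ u * χr u| + |∫ u, E₁ u * p₂ u * χr u|
        + |∫ u, E₁ u * E₂ u * χr u| := habs
    _ ≤ M/K + M/K + M/K := add_le_add (add_le_add bound1 bound2) bound3
    _ = 3 * M / K := by ring

lemma measurable_rpow_negHalf {α : Type*} [MeasurableSpace α] {f : α → ℝ} (hf : Measurable f) :
    Measurable fun p => (f p) ^ (-(1:ℝ)/2) := by
  have heq : (fun p => (f p) ^ (-(1:ℝ)/2))
      = fun p => if 0 < f p then Real.exp (Real.log (f p) * (-(1:ℝ)/2)) else 0 := by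
    funext p
    rcases lt_trichotomy (f p) 0 with hlt | heq0 | hpos
    · rw [if_neg (by linarith), Real.rpow_def_of_neg hlt,
        show (-(1:ℝ)/2) * Real.pi = -(Real.pi/2) by ring, Real.cos_neg,
        Real.cos_pi_div_two, mul_zero]
    · rw [if_neg (by rw [heq0]; exact lt_irrefl 0), heq0, Real.zero_rpow (by norm_num)]
    · rw [if_pos hpos, Real.rpow_def_of_pos hpos]
  rw [heq]
  exact Measurable.ite (measurableSet_lt measurable_const hf)
    (Real.measurable_exp.comp ((Real.measurable_log.comp hf).mul measurable_const))
    measurable_const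

lemma measurable_hk_comp {α : Type*} [MeasurableSpace α] {f g h : α → ℝ}
    (hf : Measurable f) (hg : Measurable g) (hh : Measurable h) :
    Measurable (fun p => hk (f p) (g p) (h p)) := by
  unfold hk
  refine Measurable.mul (measurable_rpow_negHalf (hf.const_mul (4 * Real.pi))) ?_
  exact Real.measurable_exp.comp
    ((((hg.sub hh).pow_const 2).neg).div (hf.const_mul 4))

lemma measurable_Efun {s K a : ℝ} (hK : 0 < K) :
    Measurable (fun q : ℝ × ℝ => (∫ y in a..(a+K), hk (s - q.1) q.2 y)/K) := by
  set Ψ : (ℝ × ℝ) × ℝ → ℝ := Set.indicator (Set.univ ×ˢ Set.Ioc a (a+K))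
      (fun q'' : (ℝ×ℝ)×ℝ => hk (s - q''.1.1) q''.1.2 q''.2) with hΨ
  have hmeas : Measurable Ψ :=
    (measurable_hk_comp (by fun_prop) (by fun_prop) (by fun_prop)).indicator
      (MeasurableSet.univ.prod measurableSet_Ioc)
  have h2 : StronglyMeasurable (fun q : ℝ×ℝ => ∫ y, Ψ (q, y)) :=
    hmeas.stronglyMeasurable.integral_prod_right'
  have heq : (fun q : ℝ × ℝ => (∫ y in a..(a+K), hk (s - q.1) q.2 y)/K)
      = fun q => (∫ y, Ψ (q, y)) / K := by
    funext q
    congr 1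
    rw [intervalIntegral.integral_of_le (by linarith : a ≤ a + K),
      ← MeasureTheory.integral_indicator measurableSet_Ioc]
    congr 1
    funext y
    by_cases hy : y ∈ Set.Ioc a (a+K)
    · rw [Set.indicator_of_mem hy, hΨ,
        Set.indicator_of_mem (Set.mem_prod.mpr ⟨Set.mem_univ _, hy⟩)]
    · rw [Set.indicator_of_notMem hy, hΨ,
        Set.indicator_of_notMem (fun hmem => hy (Set.mem_prod.mp hmem).2)]
  rw [heq]
  exact h2.measurable.div_const K

lemma boundPP {τ₁ τ₂ M : ℝ} (hτ₁ : 0 < τ₁) (hτ₂ : 0 < τ₂) (u₁ u₂ : ℝ)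
    (χr : ℝ → ℝ) (hm : Measurable χr) (hb : ∀ u, |χr u| ≤ M) :
    |∫ u, hk τ₁ u u₁ * hk τ₂ u u₂ * χr u| ≤ (4*Real.pi*τ₂) ^ (-(1:ℝ)/2) * M := by
  have pb : ∀ u, |hk τ₁ u u₁ * hk τ₂ u u₂ * χr u|
      ≤ hk τ₁ u u₁ * ((4*Real.pi*τ₂) ^ (-(1:ℝ)/2) * M) := fun u =>
    abs_mul3_le (hk_nonneg hτ₁ _ _)
      (by rw [abs_of_nonneg (hk_nonneg hτ₂ _ _)]; exact hk_le hτ₂ u u₂) (hb u)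
  have Id : Integrable (fun u => hk τ₁ u u₁ * ((4*Real.pi*τ₂) ^ (-(1:ℝ)/2) * M)) :=
    (integrable_hk' hτ₁ u₁).mul_const _
  have Ipp : Integrable (fun u => hk τ₁ u u₁ * hk τ₂ u u₂ * χr u) :=
    Integrable.mono' Id
      (((cont_hk' u₁).aestronglyMeasurable.mul (cont_hk' u₂).aestronglyMeasurable).mul
        hm.aestronglyMeasurable)
      (Filter.Eventually.of_forall (fun u => by rw [Real.norm_eq_abs]; exact pb u))
  calc |∫ u, hk τ₁ u u₁ * hk τ₂ u u₂ * χr u|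
      ≤ ∫ u, |hk τ₁ u u₁ * hk τ₂ u u₂ * χr u| := by
        simpa only [Real.norm_eq_abs] using MeasureTheory.norm_integral_le_integral_norm
          (fun u => hk τ₁ u u₁ * hk τ₂ u u₂ * χr u)
    _ ≤ ∫ u, hk τ₁ u u₁ * ((4*Real.pi*τ₂) ^ (-(1:ℝ)/2) * M) :=
        MeasureTheory.integral_mono Ipp.abs Id pb
    _ = (4*Real.pi*τ₂) ^ (-(1:ℝ)/2) * M := by
        rw [MeasureTheory.integral_mul_const, integral_hk_left hτ₁ u₁, one_mul]

set_option maxHeartbeats 1600000 in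
/-- Limit of the dynamical part of the covariance of two currents: as `K → ∞`,
`∫₀^s ∫ ∇(T_{s-r} G^K_{u₁}) ∇(T_{t-r} G^K_{u₂}) χ` converges to
`∫₀^s ∫ p_{s-r}(u,u₁) p_{t-r}(u,u₂) χ`. -/
theorem stmt14 (s t : ℝ) (hs : 0 < s) (hst : s ≤ t) (u₁ u₂ : ℝ)
    (χ : ℝ × ℝ → ℝ) (hχm : Measurable χ) (M : ℝ) (hχb : ∀ z, |χ z| ≤ M) :
    Filter.Tendsto (fun K : ℝ =>
        ∫ r in (0:ℝ)..s, ∫ u : ℝ,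
          deriv (heatSg (s - r) (G K u₁)) u * deriv (heatSg (t - r) (G K u₂)) u * χ (r, u))
      Filter.atTop
      (nhds (∫ r in (0:ℝ)..s, ∫ u : ℝ, hk (s - r) u u₁ * hk (t - r) u u₂ * χ (r, u))) := by
  have hM : 0 ≤ M := (abs_nonneg _).trans (hχb (0, 0))
  set F : ℝ → ℝ := fun r => ∫ u, hk (s - r) u u₁ * hk (t - r) u u₂ * χ (r, u) with hFdef
  set g : ℝ → ℝ := fun r => (4*Real.pi*(t - r)) ^ (-(1:ℝ)/2) * M with hgdef
  set L : ℝ := ∫ r in (0:ℝ)..s, F r with hLdef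
  -- a.e. facts on the interval
  have hne_ae : ∀ᵐ r : ℝ, r ≠ s := by
    refine MeasureTheory.ae_iff.mpr ?_
    have h1 : {a : ℝ | ¬ a ≠ s} = {s} := by ext a; simp
    rw [h1]
    exact measure_singleton s
  have haeIoo : ∀ᵐ r ∂(MeasureTheory.volume.restrict (Set.uIoc 0 s)), r ∈ Set.Ioo 0 s := by
    rw [Set.uIoc_of_le hs.le]
    have h1 : ∀ᵐ r ∂(MeasureTheory.volume.restrict (Set.Ioc 0 s)), r ∈ Set.Ioc 0 s :=
      MeasureTheory.ae_restrict_mem measurableSet_Ioc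
    have h2 : ∀ᵐ r ∂(MeasureTheory.volume.restrict (Set.Ioc 0 s)), r ≠ s :=
      MeasureTheory.ae_restrict_of_ae hne_ae
    filter_upwards [h1, h2] with r hr hrne
    exact ⟨hr.1, lt_of_le_of_ne hr.2 hrne⟩
  -- F is strongly measurable
  have hFm : MeasureTheory.StronglyMeasurable F := by
    have hΦ : Measurable (fun q : ℝ × ℝ => hk (s - q.1) q.2 u₁ * hk (t - q.1) q.2 u₂ * χ q) :=
      ((measurable_hk_comp (by fun_prop) (by fun_prop) (by fun_prop)).mul
        (measurable_hk_comp (by fun_prop) (by fun_prop) (by fun_prop))).mul hχm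
    exact hΦ.stronglyMeasurable.integral_prod_right'
  -- bound for F on Ioo
  have hFb : ∀ r ∈ Set.Ioo 0 s, |F r| ≤ g r := by
    intro r hr
    have h1 : 0 < s - r := by linarith [hr.2]
    have h2 : 0 < t - r := by linarith [hr.2]
    exact boundPP h1 h2 u₁ u₂ (fun u => χ (r, u))
      (hχm.comp measurable_prodMk_left) (fun u => hχb (r, u))
  -- interval integrability of the dominating function g
  have hIIg : IntervalIntegrable g MeasureTheory.volume 0 s := by
    have hrpow : IntervalIntegrable (fun x : ℝ => x ^ (-(1:ℝ)/2)) MeasureTheory.volume t (t - s) := by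
      have := intervalIntegral.intervalIntegrable_rpow' (a := t) (b := t - s)
        (show (-1:ℝ) < -(1:ℝ)/2 by norm_num)
      simpa using this
    have hcomp := hrpow.comp_sub_left t
    simp only [sub_self, sub_sub_cancel] at hcomp
    -- hcomp : IntervalIntegrable (fun x => (t - x) ^ (-(1:ℝ)/2)) volume 0 s
    have hg2 : IntervalIntegrable
        (fun r : ℝ => (4*Real.pi) ^ (-(1:ℝ)/2) * (t - r) ^ (-(1:ℝ)/2) * M)
        MeasureTheory.volume 0 s := (hcomp.const_mul _).mul_const _
    refine hg2.mono_fun' ?_ ?_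
    · exact ((measurable_rpow_negHalf (by fun_prop)).mul measurable_const).aestronglyMeasurable
    · filter_upwards [haeIoo] with r hr
      have h2 : (0:ℝ) ≤ t - r := by linarith [hr.2]
      have heq : (4*Real.pi*(t - r)) ^ (-(1:ℝ)/2)
          = (4*Real.pi) ^ (-(1:ℝ)/2) * (t - r) ^ (-(1:ℝ)/2) :=
        Real.mul_rpow (by positivity) h2
      rw [Real.norm_eq_abs, hgdef]
      beta_reduce
      rw [heq, abs_of_nonneg (by positivity)]
  -- interval integrability of F
  have hIIF : IntervalIntegrable F MeasureTheory.volume 0 s := by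
    refine hIIg.mono_fun' (hFm.aestronglyMeasurable.restrict) ?_
    filter_upwards [haeIoo] with r hr
    rw [Real.norm_eq_abs]
    exact hFb r hr
  -- main estimate for each K ≥ 1
  have hkey : ∀ K : ℝ, 1 ≤ K →
      |(∫ r in (0:ℝ)..s, ∫ u : ℝ,
          deriv (heatSg (s - r) (G K u₁)) u * deriv (heatSg (t - r) (G K u₂)) u * χ (r, u))
        - L| ≤ s * (3 * M / K) := by
    intro K hK1
    have hK : 0 < K := lt_of_lt_of_le one_pos hK1
    set GKf : ℝ → ℝ := fun r => ∫ u,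
        (hk (s - r) u u₁ - (∫ y in u₁..(u₁+K), hk (s - r) u y)/K) *
        (hk (t - r) u u₂ - (∫ y in u₂..(u₂+K), hk (t - r) u y)/K) * χ (r, u) with hGKdef
    -- FK = GKf a.e. on the interval
    have hcong : (∫ r in (0:ℝ)..s, ∫ u : ℝ,
          deriv (heatSg (s - r) (G K u₁)) u * deriv (heatSg (t - r) (G K u₂)) u * χ (r, u))
        = ∫ r in (0:ℝ)..s, GKf r := by
      refine intervalIntegral.integral_congr_ae ?_
      filter_upwards [hne_ae] with r hrne hrmem
      rw [Set.uIoc_of_le hs.le] at hrmem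
      have hrIoo : r ∈ Set.Ioo 0 s := ⟨hrmem.1, lt_of_le_of_ne hrmem.2 hrne⟩
      have h1 : 0 < s - r := by linarith [hrIoo.2]
      have h2 : 0 < t - r := by linarith [hrIoo.2]
      rw [hGKdef]
      congr 1
      funext u
      rw [(hasDerivAt_heatSg_G h1 hK u₁ u).deriv, (hasDerivAt_heatSg_G h2 hK u₂ u).deriv]
    rw [hcong]
    -- pointwise estimate
    have hstep : ∀ r ∈ Set.Ioo 0 s, |GKf r - F r| ≤ 3 * M / K := by
      intro r hr
      have h1 : 0 < s - r := by linarith [hr.2]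
      have h2 : 0 < t - r := by linarith [hr.2]
      exact step h1 h2 hK u₁ u₂ (fun u => χ (r, u))
        (hχm.comp measurable_prodMk_left) (fun u => hχb (r, u))
    -- GKf strongly measurable
    have hGm : MeasureTheory.StronglyMeasurable GKf := by
      have hΦ : Measurable (fun q : ℝ × ℝ =>
          (hk (s - q.1) q.2 u₁ - (∫ y in u₁..(u₁+K), hk (s - q.1) q.2 y)/K) *
          (hk (t - q.1) q.2 u₂ - (∫ y in u₂..(u₂+K), hk (t - q.1) q.2 y)/K) * χ q) := by
        refine Measurable.mul (Measurable.mul ?_ ?_) hχm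
        · exact (measurable_hk_comp (by fun_prop) (by fun_prop) (by fun_prop)).sub
            (measurable_Efun hK)
        · exact (measurable_hk_comp (by fun_prop) (by fun_prop) (by fun_prop)).sub
            (measurable_Efun hK)
      exact hΦ.stronglyMeasurable.integral_prod_right'
    -- interval integrability of GKf
    have hIIG : IntervalIntegrable GKf MeasureTheory.volume 0 s := by
      refine (hIIg.add (_root_.intervalIntegrable_const (c := 3 * M / K))).mono_fun'
        (hGm.aestronglyMeasurable.restrict) ?_
      filter_upwards [haeIoo] with r hr
      rw [Real.norm_eq_abs]
      calc |GKf r| ≤ |GKf r - F r| + |F r| := by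
            have := abs_add_le (GKf r - F r) (F r); simpa using this
        _ ≤ 3 * M / K + g r := add_le_add (hstep r hr) (hFb r hr)
        _ = g r + 3 * M / K := by ring
    -- conclude
    rw [hLdef, ← intervalIntegral.integral_sub hIIG hIIF]
    have hnorm := intervalIntegral.norm_integral_le_of_norm_le
      (μ := MeasureTheory.volume) (f := fun r => GKf r - F r)
      (g := fun _ => 3 * M / K) (a := 0) (b := s) hs.le ?_ (_root_.intervalIntegrable_const)
    · rw [Real.norm_eq_abs] at hnorm
      refine hnorm.trans ?_
      rw [intervalIntegral.integral_const, smul_eq_mul, sub_zero]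
    · filter_upwards [hne_ae] with r hrne hrmem
      rw [Real.norm_eq_abs]
      exact hstep r ⟨hrmem.1, lt_of_le_of_ne hrmem.2 hrne⟩
  -- final limit
  have h0 : Filter.Tendsto (fun K : ℝ => s * (3 * M) / K) Filter.atTop (nhds 0) :=
    Filter.Tendsto.div_atTop tendsto_const_nhds Filter.tendsto_id
  have hdiff : Filter.Tendsto (fun K : ℝ =>
      (∫ r in (0:ℝ)..s, ∫ u : ℝ,
        deriv (heatSg (s - r) (G K u₁)) u * deriv (heatSg (t - r) (G K u₂)) u * χ (r, u)) - L)
      Filter.atTop (nhds 0) := by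
    refine squeeze_zero_norm' ?_ h0
    filter_upwards [Filter.eventually_ge_atTop (1:ℝ)] with K hK1
    rw [Real.norm_eq_abs]
    calc |(∫ r in (0:ℝ)..s, ∫ u : ℝ,
          deriv (heatSg (s - r) (G K u₁)) u * deriv (heatSg (t - r) (G K u₂)) u * χ (r, u)) - L|
        ≤ s * (3 * M / K) := hkey K hK1
      _ = s * (3 * M) / K := by ring
  have := hdiff.add_const L
  simpa using this
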